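/- Let Y = blockdiag(P¹, P²), where for j = 1, 2 the matrix Pʲ is a nonempty finite product of matrices of the form D(Aʲ_g) with each Aʲ_g an AIMD matrix, and at least one factor of each Pʲ equals D(B) with B the full back-off matrix. Then for every nonzero z ∈ W, the strict contraction property ‖Yz‖ < ‖z‖ holds. -/

import Mathlib

noncomputable def l1 {n : ℕ} (z : Fin n → ℝ) : ℝ := ∑ i, |z i|

noncomputable def normT {n T : ℕ} (z : Fin T → Fin n → ℝ) : ℝ := ⨆ ℓ, l1 (z ℓ)

/-- The action of the block matrix `D(A)` on a block vector `z ∈ ℝ^{Tn}`: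
`(D(A)z)₁ = A z₁` and `(D(A)z)_r = (1/r)·A z₁ + ((r−1)/r)·z_{r−1}` for `r = 2,…,T`
(indices here are 0-based). -/
noncomputable def DApply {n T : ℕ} (A : Matrix (Fin n) (Fin n) ℝ)
    (z : Fin T → Fin n → ℝ) : Fin T → Fin n → ℝ :=
  fun r => (1 / ((r : ℕ) + 1) : ℝ) • A.mulVec (z ⟨0, r.pos⟩)
    + (((r : ℕ) : ℝ) / ((r : ℕ) + 1)) • z ⟨(r : ℕ) - 1, lt_of_le_of_lt (Nat.pred_le _) r.isLt⟩

/-- `A` is an AIMD matrix: `A = diag(β̃) + (1/n)·e·(eᵀ − β̃ᵀ)` where each `β̃ᵢ ∈ {β, 1}`. -/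
def IsAIMD (n : ℕ) (β : ℝ) (A : Matrix (Fin n) (Fin n) ℝ) : Prop :=
  ∃ b : Fin n → ℝ, (∀ i, b i = β ∨ b i = 1) ∧
    A = Matrix.diagonal b + (1 / (n : ℝ)) • Matrix.of (fun _ j => 1 - b j)

/-- The full back-off AIMD matrix `B = β·I + ((1−β)/n)·e·eᵀ`. -/
noncomputable def Bmat (n : ℕ) (β : ℝ) : Matrix (Fin n) (Fin n) ℝ :=
  β • (1 : Matrix (Fin n) (Fin n) ℝ) + ((1 - β) / (n : ℝ)) • Matrix.of (fun _ _ => (1 : ℝ))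

/-- The norm on pairs: `‖(y¹, y²)‖ = max{‖y¹‖_T, ‖y²‖_T}`. -/
noncomputable def normPair {n T : ℕ} (y : (Fin T → Fin n → ℝ) × (Fin T → Fin n → ℝ)) : ℝ :=
  max (normT y.1) (normT y.2)

/-!
Every AIMD matrix is column stochastic, so it is non-expansive in `ℓ¹` and preserves the sum of
a vector; hence each `D(A)` is non-expansive for `‖·‖_T` and maps `W_T` to itself. On `W_T` the
full back-off matrix acts as `β • id`, and block `r` (0-based) of `D(B) z` is the convex
combination `(B z₁ + r z_{r-1}) / (r + 1)`, so `‖D(B) z‖_T ≤ (1 - (1 - β) / T) ‖z‖_T`. Splitting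
a product at a factor `D(B)` makes it a strict contraction of each component of `W`.
-/

open Matrix

lemma l1_nonneg {n : ℕ} (z : Fin n → ℝ) : 0 ≤ l1 z :=
  Finset.sum_nonneg fun _ _ => abs_nonneg _

lemma l1_smul {n : ℕ} (a : ℝ) (z : Fin n → ℝ) : l1 (a • z) = |a| * l1 z := by
  simp [l1, Finset.mul_sum, abs_mul]

lemma l1_add_le {n : ℕ} (x y : Fin n → ℝ) : l1 (x + y) ≤ l1 x + l1 y := by
  rw [l1, l1, l1, ← Finset.sum_add_distrib]
  exact Finset.sum_le_sum fun i _ => abs_add_le _ _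

lemma l1_pos {n : ℕ} {z : Fin n → ℝ} (hz : z ≠ 0) : 0 < l1 z := by
  obtain ⟨i, hi⟩ := Function.ne_iff.mp hz
  calc 0 < |z i| := abs_pos.mpr hi
    _ ≤ l1 z := Finset.single_le_sum (f := fun j => |z j|) (fun j _ => abs_nonneg _)
        (Finset.mem_univ i)

lemma l1_mulVec_le_of_mem_colStochastic {n : ℕ} {A : Matrix (Fin n) (Fin n) ℝ}
    (hA : A ∈ colStochastic ℝ (Fin n)) (x : Fin n → ℝ) : l1 (A *ᵥ x) ≤ l1 x := by
  obtain ⟨hA0, hA1⟩ := mem_colStochastic_iff_sum.mp hA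
  calc l1 (A *ᵥ x) ≤ ∑ i, ∑ j, A i j * |x j| := by
        refine Finset.sum_le_sum fun i _ => ?_
        simp only [mulVec, dotProduct]
        refine (Finset.abs_sum_le_sum_abs _ _).trans_eq ?_
        exact Finset.sum_congr rfl fun j _ => by rw [abs_mul, abs_of_nonneg (hA0 i j)]
    _ = ∑ j, (∑ i, A i j) * |x j| := by
        rw [Finset.sum_comm]
        simp only [Finset.sum_mul]
    _ = l1 x := by simp only [hA1, one_mul, l1]

lemma le_normT {n T : ℕ} (z : Fin T → Fin n → ℝ) (ℓ : Fin T) : l1 (z ℓ) ≤ normT z :=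
  le_ciSup (f := fun ℓ => l1 (z ℓ)) (Set.finite_range _).bddAbove ℓ

lemma normT_le {n T : ℕ} {z : Fin T → Fin n → ℝ} {a : ℝ} (h : ∀ ℓ, l1 (z ℓ) ≤ a)
    (ha : 0 ≤ a) : normT z ≤ a :=
  Real.iSup_le h ha

lemma normT_nonneg {n T : ℕ} (z : Fin T → Fin n → ℝ) : 0 ≤ normT z :=
  Real.iSup_nonneg fun _ => l1_nonneg _

lemma normT_pos {n T : ℕ} {z : Fin T → Fin n → ℝ} (hz : z ≠ 0) : 0 < normT z := by
  obtain ⟨t, ht⟩ := Function.ne_iff.mp hz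
  exact (l1_pos ht).trans_le (le_normT z t)

lemma IsAIMD.mem_colStochastic {n : ℕ} {β : ℝ} {A : Matrix (Fin n) (Fin n) ℝ}
    (hA : IsAIMD n β A) (hβ0 : 0 ≤ β) (hβ1 : β ≤ 1) : A ∈ colStochastic ℝ (Fin n) := by
  obtain ⟨b, hb, rfl⟩ := hA
  have hb0 : ∀ j, 0 ≤ b j := fun j => by rcases hb j with h | h <;> rw [h] <;> linarith
  have hb1 : ∀ j, 0 ≤ 1 - b j := fun j => by rcases hb j with h | h <;> rw [h] <;> linarith
  refine mem_colStochastic_iff_sum.mpr ⟨fun i j => ?_, fun j => ?_⟩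
  · have := mul_nonneg (inv_nonneg.mpr (Nat.cast_nonneg (α := ℝ) n)) (hb1 j)
    by_cases h : i = j <;> simp [h] <;> nlinarith [hb0 j]
  · have hn : (n : ℝ) ≠ 0 := Nat.cast_ne_zero.mpr (Fin.pos j).ne'
    simp only [Matrix.add_apply, Matrix.smul_apply, of_apply, smul_eq_mul, diagonal_apply,
      Finset.sum_add_distrib, Finset.sum_ite_eq', Finset.mem_univ, if_true]
    simp [Finset.sum_const, hn]

lemma Bmat_mulVec_of_sum_eq_zero {n : ℕ} (β : ℝ) {x : Fin n → ℝ} (hx : ∑ i, x i = 0) :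
    Bmat n β *ᵥ x = β • x := by
  have hJ : (of fun (_ _ : Fin n) => (1 : ℝ)) *ᵥ x = 0 :=
    funext fun i => by simp [mulVec, dotProduct, hx]
  rw [Bmat, add_mulVec, smul_mulVec, smul_mulVec, one_mulVec, hJ, smul_zero, add_zero]

lemma one_sub_div_natCast_nonneg {ρ : ℝ} (hρ0 : 0 ≤ ρ) (hρ1 : ρ ≤ 1) (T : ℕ) :
    0 ≤ 1 - (1 - ρ) / T := by
  rcases T.eq_zero_or_pos with rfl | hT
  · simp
  · have : (1 - ρ) / T ≤ 1 - ρ := div_le_self (by linarith) (by exact_mod_cast hT)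
    linarith

section DApply

variable {n T : ℕ}

lemma sum_DApply_eq_zero {A : Matrix (Fin n) (Fin n) ℝ} (hA : A ∈ colStochastic ℝ (Fin n))
    {z : Fin T → Fin n → ℝ} (hz : ∀ t, ∑ i, z t i = 0) (r : Fin T) :
    ∑ i, DApply A z r i = 0 := by
  simp only [DApply, Pi.add_apply, Pi.smul_apply, smul_eq_mul, Finset.sum_add_distrib,
    ← Finset.mul_sum, sum_mulVec_of_mem_colStochastic hA, hz, mul_zero, add_zero]

lemma normT_DApply_le {A : Matrix (Fin n) (Fin n) ℝ} {ρ : ℝ} (hρ0 : 0 ≤ ρ) (hρ1 : ρ ≤ 1)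
    {z : Fin T → Fin n → ℝ} (hA : ∀ t, l1 (A *ᵥ z t) ≤ ρ * l1 (z t)) :
    normT (DApply A z) ≤ (1 - (1 - ρ) / T) * normT z := by
  refine normT_le (fun r => ?_)
    (mul_nonneg (one_sub_div_natCast_nonneg hρ0 hρ1 T) (normT_nonneg z))
  set M := normT z
  have hr : (0 : ℝ) < (r : ℕ) + 1 := by positivity
  have hrT : ((r : ℕ) : ℝ) + 1 ≤ T := by exact_mod_cast r.isLt
  calc l1 (DApply A z r)
      ≤ 1 / ((r : ℕ) + 1) * l1 (A *ᵥ z ⟨0, r.pos⟩)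
        + (r : ℕ) / ((r : ℕ) + 1) * l1 (z ⟨(r : ℕ) - 1, by omega⟩) := by
        refine (l1_add_le _ _).trans_eq ?_
        rw [l1_smul, l1_smul, abs_of_nonneg (by positivity), abs_of_nonneg (by positivity)]
    _ ≤ 1 / ((r : ℕ) + 1) * (ρ * M) + (r : ℕ) / ((r : ℕ) + 1) * M := by
        gcongr
        · exact (hA _).trans (mul_le_mul_of_nonneg_left (le_normT z _) hρ0)
        · exact le_normT z _
    _ = (1 - (1 - ρ) / ((r : ℕ) + 1)) * M := by field_simp; ring
    _ ≤ (1 - (1 - ρ) / T) * M := by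
        gcongr
        exact normT_nonneg z

lemma normT_DApply_le_of_mem_colStochastic {A : Matrix (Fin n) (Fin n) ℝ}
    (hA : A ∈ colStochastic ℝ (Fin n)) (z : Fin T → Fin n → ℝ) :
    normT (DApply A z) ≤ normT z := by
  simpa using normT_DApply_le zero_le_one le_rfl
    (fun t => (l1_mulVec_le_of_mem_colStochastic hA (z t)).trans_eq (one_mul _).symm)

lemma normT_DApply_Bmat_le {β : ℝ} (hβ0 : 0 ≤ β) (hβ1 : β ≤ 1) {z : Fin T → Fin n → ℝ}
    (hz : ∀ t, ∑ i, z t i = 0) :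
    normT (DApply (Bmat n β) z) ≤ (1 - (1 - β) / T) * normT z :=
  normT_DApply_le hβ0 hβ1 fun t => by
    rw [Bmat_mulVec_of_sum_eq_zero β (hz t), l1_smul, abs_of_nonneg hβ0]

variable {L : List (Matrix (Fin n) (Fin n) ℝ)}

lemma sum_foldl_DApply_eq_zero (hL : ∀ A ∈ L, A ∈ colStochastic ℝ (Fin n))
    {z : Fin T → Fin n → ℝ} (hz : ∀ t, ∑ i, z t i = 0) (t : Fin T) :
    ∑ i, L.foldl (fun v A => DApply A v) z t i = 0 := by
  induction L generalizing z with
  | nil => exact hz t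
  | cons A L ih =>
    exact ih (fun B hB => hL B (List.mem_cons_of_mem A hB))
      (sum_DApply_eq_zero (hL A List.mem_cons_self) hz)

lemma normT_foldl_DApply_le (hL : ∀ A ∈ L, A ∈ colStochastic ℝ (Fin n))
    (z : Fin T → Fin n → ℝ) : normT (L.foldl (fun v A => DApply A v) z) ≤ normT z := by
  induction L generalizing z with
  | nil => exact le_rfl
  | cons A L ih =>
    exact (ih (fun B hB => hL B (List.mem_cons_of_mem A hB)) _).trans
      (normT_DApply_le_of_mem_colStochastic (hL A List.mem_cons_self) z)

lemma normT_foldl_DApply_le_of_Bmat_mem {β : ℝ} (hβ0 : 0 ≤ β) (hβ1 : β ≤ 1)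
    (hL : ∀ A ∈ L, A ∈ colStochastic ℝ (Fin n)) (hB : Bmat n β ∈ L)
    {z : Fin T → Fin n → ℝ} (hz : ∀ t, ∑ i, z t i = 0) :
    normT (L.foldl (fun v A => DApply A v) z) ≤ (1 - (1 - β) / T) * normT z := by
  obtain ⟨L₁, L₂, rfl⟩ := List.append_of_mem hB
  have hL₁ : ∀ A ∈ L₁, A ∈ colStochastic ℝ (Fin n) := fun A hA => hL A (by simp [hA])
  have hL₂ : ∀ A ∈ L₂, A ∈ colStochastic ℝ (Fin n) := fun A hA => hL A (by simp [hA])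
  rw [List.foldl_append, List.foldl_cons]
  calc _ ≤ normT (DApply (Bmat n β) (L₁.foldl (fun v A => DApply A v) z)) :=
        normT_foldl_DApply_le hL₂ _
    _ ≤ (1 - (1 - β) / T) * normT (L₁.foldl (fun v A => DApply A v) z) :=
        normT_DApply_Bmat_le hβ0 hβ1 (sum_foldl_DApply_eq_zero hL₁ hz)
    _ ≤ (1 - (1 - β) / T) * normT z :=
        mul_le_mul_of_nonneg_left (normT_foldl_DApply_le hL₁ z)
          (one_sub_div_natCast_nonneg hβ0 hβ1 T)

end DApply

theorem Y_strict_contraction_on_W_general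
    (n T : ℕ) (hT : 0 < T)
    (β : ℝ) (hβ0 : 0 < β) (hβ1 : β < 1)
    (m1 m2 : ℕ)
    (A1 : Fin m1 → Matrix (Fin n) (Fin n) ℝ)
    (A2 : Fin m2 → Matrix (Fin n) (Fin n) ℝ)
    (hA1 : ∀ g, IsAIMD n β (A1 g)) (hA2 : ∀ g, IsAIMD n β (A2 g))
    (hB1 : ∃ g, A1 g = Bmat n β) (hB2 : ∃ g, A2 g = Bmat n β)
    (z1 z2 : Fin T → Fin n → ℝ)
    (hz1 : ∀ t, ∑ i, z1 t i = 0) (hz2 : ∀ t, ∑ i, z2 t i = 0)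
    (hz0 : ¬(z1 = 0 ∧ z2 = 0)) :
    normPair ((List.ofFn A1).foldl (fun v Ag => DApply Ag v) z1,
              (List.ofFn A2).foldl (fun v Ag => DApply Ag v) z2) <
    normPair (z1, z2) := by
  have hcol {m : ℕ} {A : Fin m → Matrix (Fin n) (Fin n) ℝ} (hA : ∀ g, IsAIMD n β (A g)) :
      ∀ M ∈ List.ofFn A, M ∈ colStochastic ℝ (Fin n) := by
    simp only [List.mem_ofFn, forall_exists_index, forall_apply_eq_imp_iff]
    exact fun g => (hA g).mem_colStochastic hβ0.le hβ1.le
  set c : ℝ := 1 - (1 - β) / T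
  have hc : c < 1 := by
    have : 0 < (1 - β) / T := div_pos (by linarith) (by exact_mod_cast hT)
    linarith
  have hc0 : 0 ≤ c := one_sub_div_natCast_nonneg hβ0.le hβ1.le T
  have h1 := normT_foldl_DApply_le_of_Bmat_mem hβ0.le hβ1.le (hcol hA1)
    (List.mem_ofFn.mpr hB1) hz1
  have h2 := normT_foldl_DApply_le_of_Bmat_mem hβ0.le hβ1.le (hcol hA2)
    (List.mem_ofFn.mpr hB2) hz2
  have hM : 0 < normPair (z1, z2) := by
    rcases not_and_or.mp hz0 with h | h
    · exact (normT_pos h).trans_le (le_max_left _ _)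
    · exact (normT_pos h).trans_le (le_max_right _ _)
  calc _ ≤ c * normPair (z1, z2) :=
        max_le (h1.trans (mul_le_mul_of_nonneg_left (le_max_left _ _) hc0))
          (h2.trans (mul_le_mul_of_nonneg_left (le_max_right _ _) hc0))
    _ < normPair (z1, z2) := mul_lt_of_lt_one_left hM hc

/-- Let `Y = blockdiag(P¹, P²)`, where each `Pʲ` is a nonempty finite product of matrices
`D(Aʲ_g)` with each `Aʲ_g` an AIMD matrix, and at least one factor of each `Pʲ` equals
`D(B)`. Then `‖Yz‖ < ‖z‖` for every nonzero `z ∈ W`. -/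
theorem Y_strict_contraction_on_W
    (n T : ℕ) (hn : 0 < n) (hT : 0 < T)
    (β : ℝ) (hβ0 : 0 < β) (hβ1 : β < 1)
    (m1 m2 : ℕ) (hm1 : 0 < m1) (hm2 : 0 < m2)
    (A1 : Fin m1 → Matrix (Fin n) (Fin n) ℝ)
    (A2 : Fin m2 → Matrix (Fin n) (Fin n) ℝ)
    (hA1 : ∀ g, IsAIMD n β (A1 g)) (hA2 : ∀ g, IsAIMD n β (A2 g))
    (hB1 : ∃ g, A1 g = Bmat n β) (hB2 : ∃ g, A2 g = Bmat n β)
    (z1 z2 : Fin T → Fin n → ℝ)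
    (hz1 : ∀ t, ∑ i, z1 t i = 0) (hz2 : ∀ t, ∑ i, z2 t i = 0)
    (hz0 : ¬(z1 = 0 ∧ z2 = 0)) :
    normPair ((List.ofFn A1).foldl (fun v Ag => DApply Ag v) z1,
              (List.ofFn A2).foldl (fun v Ag => DApply Ag v) z2) <
    normPair (z1, z2) :=
  Y_strict_contraction_on_W_general n T hT β hβ0 hβ1 m1 m2 A1 A2 hA1 hA2 hB1 hB2 z1 z2 hz1 hz2 hz0
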